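/- arXiv:1905.00114 — 2 statements merged into one kernel-verified Lean document; each statement's English description precedes it below -/
import Mathlib

section
/- Let n ≥ 2 and let ξ : ℝⁿ → ℝ be smooth (C²) and satisfy ∂²ξ/∂xᵢ∂xⱼ = (Δξ/n)·δᵢⱼ for all i, j ∈ {1,…,n} at every point of ℝⁿ, where Δξ is the Euclidean Laplacian. Then there exist constants a, b₁,…,bₙ, c ∈ ℝ such that ξ(x₁,…,xₙ) = Σᵢ ((a/2)·xᵢ² + bᵢ·xᵢ) + c for all (x₁,…,xₙ) ∈ ℝⁿ. -/
/-!
Write `gⱼ = ∂ⱼξ` and `f = Δξ / n`, so the hypothesis says `D gⱼ = f • dxⱼ`. As `∂ᵢgⱼ = 0` for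
`i ≠ j`, each `gⱼ`, and with it `f = ∂ⱼgⱼ`, is invariant under translations that fix the
coordinate `xⱼ`; since `n ≥ 2`, such translations for two different `j` connect any two points,
so `f` is a constant `a` (no third derivatives of `ξ` are needed for this). Then
`gⱼ x = a xⱼ + bⱼ`, and `ξ` minus `∑ᵢ (a/2 · xᵢ² + bᵢ xᵢ)` has zero derivative.
-/

open EuclideanSpace

theorem Function.Periodic.fderiv {𝕜 : Type*} [NontriviallyNormedField 𝕜] {E F : Type*}
    [NormedAddCommGroup E] [NormedSpace 𝕜 E] [NormedAddCommGroup F] [NormedSpace 𝕜 F]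
    {g : E → F} {v : E} (hg : Function.Periodic g v) : Function.Periodic (fderiv 𝕜 g) v := by
  intro x
  rw [← fderiv_comp_add_right]
  exact congrArg (_root_.fderiv 𝕜 · x) (funext hg)

section NormedSpace

variable {E F : Type*} [NormedAddCommGroup E] [NormedSpace ℝ E] [NormedAddCommGroup F]
  [NormedSpace ℝ F]

theorem periodic_of_fderiv_apply_eq_zero {g : E → F} (hg : Differentiable ℝ g) {v : E}
    (hv : ∀ y, fderiv ℝ g y v = 0) : Function.Periodic g v := by
  intro x
  have hline : ∀ t : ℝ, HasDerivAt (fun t : ℝ => g (x + t • v)) 0 t := fun t => by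
    simpa [Function.comp_def, hv] using (hg _).hasFDerivAt.comp_hasDerivAt t
      (((hasDerivAt_id t).smul_const v).const_add x)
  simpa using is_const_of_deriv_eq_zero (fun t => (hline t).differentiableAt)
    (fun t => (hline t).deriv) 1 0

theorem apply_eq_of_fderiv_eq_const {g : E → F} (hg : Differentiable ℝ g) {L : E →L[ℝ] F}
    (hL : ∀ y, fderiv ℝ g y = L) (x : E) : g x = L x + g 0 := by
  refine congrFun (eq_of_fderiv_eq hg (L.differentiable.add_const (g 0)) (fun y => ?_) 0 ?_) x
  · rw [hL, fderiv_add_const, L.fderiv]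
  · simp

end NormedSpace

section EuclideanSpace

variable {ι : Type*} [Fintype ι] [DecidableEq ι]

theorem EuclideanSpace.strongDual_eq_sum_smul_proj {𝕜 : Type*} [RCLike 𝕜]
    (L : StrongDual 𝕜 (EuclideanSpace 𝕜 ι)) : L = ∑ i, L (single i 1) • proj i := by
  ext x
  conv_lhs => rw [← (EuclideanSpace.basisFun ι 𝕜).sum_repr x]
  simp [mul_comm]

omit [Fintype ι] in
theorem EuclideanSpace.apply_eq_of_forall_coord_eq [Nontrivial ι] {α : Type*}
    {f : EuclideanSpace ℝ ι → α} (hf : ∀ j x y, x j = y j → f x = f y)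
    (x y : EuclideanSpace ℝ ι) : f x = f y := by
  obtain ⟨i, j, hij⟩ := exists_pair_ne ι
  calc f x = f (single i (x i)) := hf i _ _ (by simp)
    _ = f (single i (y i)) := hf j _ _ (by simp [hij.symm])
    _ = f y := hf i _ _ (by simp)

omit [DecidableEq ι] in
theorem EuclideanSpace.hasFDerivAt_sum_apply {𝕜 : Type*} [RCLike 𝕜] {φ : ι → 𝕜 → 𝕜}
    {φ' : ι → 𝕜} {x : EuclideanSpace 𝕜 ι} (hφ : ∀ i, HasDerivAt (φ i) (φ' i) (x i)) :
    HasFDerivAt (fun y : EuclideanSpace 𝕜 ι => ∑ i, φ i (y i)) (∑ i, φ' i • proj (𝕜 := 𝕜) i) x :=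
  HasFDerivAt.fun_sum fun i _ => (hφ i).comp_hasFDerivAt x (proj (𝕜 := 𝕜) i).hasFDerivAt

theorem EuclideanSpace.eq_of_fderiv_eq_smul_proj [Nontrivial ι] {g : ι → EuclideanSpace ℝ ι → ℝ}
    {f : EuclideanSpace ℝ ι → ℝ} (hg : ∀ j, Differentiable ℝ (g j))
    (hgf : ∀ j y, fderiv ℝ (g j) y = f y • proj j) (x y : EuclideanSpace ℝ ι) : f x = f y := by
  refine apply_eq_of_forall_coord_eq (fun j x y hxy => ?_) x y
  have hperiodic : Function.Periodic (g j) (x - y) :=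
    periodic_of_fderiv_apply_eq_zero (hg j) fun z => by simp [hgf, hxy]
  simpa [hgf] using congrArg (· (single j 1)) (hperiodic.fderiv (𝕜 := ℝ) y)

theorem EuclideanSpace.eq_quadratic_of_fderiv_single_eq {h : EuclideanSpace ℝ ι → ℝ}
    (hh : Differentiable ℝ h) {a : ℝ} {b : ι → ℝ}
    (hdh : ∀ i y, fderiv ℝ h y (single i 1) = a * y i + b i) (x : EuclideanSpace ℝ ι) :
    h x = ∑ i, ((a / 2) * x i ^ 2 + b i * x i) + h 0 := by
  have hφ : ∀ i t, HasDerivAt (fun t => (a / 2) * t ^ 2 + b i * t) (a * t + b i) t := fun i t =>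
    (((hasDerivAt_pow 2 t).const_mul (a / 2)).add ((hasDerivAt_id' t).const_mul (b i))).congr_deriv
      (by ring)
  have hq : ∀ y : EuclideanSpace ℝ ι, HasFDerivAt
      (fun x : EuclideanSpace ℝ ι => ∑ i, ((a / 2) * x i ^ 2 + b i * x i) + h 0)
      (∑ i, (a * y i + b i) • proj (𝕜 := ℝ) i) y := fun y =>
    (hasFDerivAt_sum_apply fun i => hφ i (y i)).add_const (h 0)
  refine congrFun (eq_of_fderiv_eq hh (fun y => (hq y).differentiableAt) (fun y => ?_) 0 ?_) x
  · rw [(hq y).fderiv, strongDual_eq_sum_smul_proj (fderiv ℝ h y)]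
    simp only [hdh]
  · simp

end EuclideanSpace

theorem stmt_4 (n : ℕ) (hn : 2 ≤ n)
    (ξ : EuclideanSpace ℝ (Fin n) → ℝ)
    (hξ : ContDiff ℝ 2 ξ)
    (pd : Fin n → (EuclideanSpace ℝ (Fin n) → ℝ) → EuclideanSpace ℝ (Fin n) → ℝ)
    (hpd : ∀ i g x, pd i g x = fderiv ℝ g x (EuclideanSpace.single i 1))
    (heq : ∀ (x : EuclideanSpace ℝ (Fin n)) (i j : Fin n),
      pd i (pd j ξ) x =
        ((∑ k : Fin n, pd k (pd k ξ) x) / n) * (if i = j then 1 else 0)) :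
    ∃ (a : ℝ) (b : Fin n → ℝ) (c : ℝ),
      ∀ x : EuclideanSpace ℝ (Fin n),
        ξ x = (∑ i : Fin n, ((a / 2) * (x i) ^ 2 + b i * x i)) + c := by
  have : Nontrivial (Fin n) := Fin.nontrivial_iff_two_le.mpr hn
  have hg : ∀ j, Differentiable ℝ (pd j ξ) := fun j => by
    rw [show pd j ξ = fun x => fderiv ℝ ξ x (single j 1) from funext (hpd j ξ)]
    exact ((hξ.fderiv_right (by norm_num)).clm_apply contDiff_const).differentiable one_ne_zero
  have hgf : ∀ j y, fderiv ℝ (pd j ξ) y = ((∑ k, pd k (pd k ξ) y) / n) • proj j := fun j y => by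
    rw [strongDual_eq_sum_smul_proj (fderiv ℝ (pd j ξ) y),
      Finset.sum_congr rfl fun i _ => by rw [← hpd, heq]]
    simp
  have hlin : ∀ j x, pd j ξ x = (∑ k, pd k (pd k ξ) 0) / n * x j + pd j ξ 0 := fun j =>
    apply_eq_of_fderiv_eq_const (hg j) fun y => by
      rw [hgf, eq_of_fderiv_eq_smul_proj hg hgf y 0]
  exact ⟨_, fun i => pd i ξ 0, ξ 0,
    eq_quadratic_of_fderiv_single_eq (hξ.differentiable (by norm_num)) fun i x => by
      rw [← hpd, hlin]⟩
end

section
/- Let n ≥ 2 and let ξ : Hⁿ → ℝ be a C² function on the upper half-space Hⁿ = {x ∈ ℝⁿ : xₙ > 0} satisfying, for all i, j ∈ {1,…,n}: ∂²ξ/∂xᵢ∂xⱼ - (Δξ/n)·δᵢⱼ + ∂ᵢξ·(δⱼₙ/xₙ) + (δᵢₙ/xₙ)·∂ⱼξ - (2/n)·(∂ₙξ/xₙ)·δᵢⱼ = 0 at every point, where Δ is the Euclidean Laplacian. Then there exist constants a, b₁,…,bₙ, c₁,…,cₙ ∈ ℝ with ξ(x₁,…,xₙ) = (1/xₙ)·Σᵢ₌₁ⁿ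 ((a/2)·xᵢ² + bᵢxᵢ + cᵢ) for all x ∈ Hⁿ. -/
/-!
Multiplying the equation by `x N` says that `u = x N * ξ` has Hessian `μ x • I` with
`μ = x N * Δξ / n + (2 / n) * ∂_N ξ`. In dimension at least two such a `μ` is constant: the
directional derivative `∂_v u` has derivative `μ * ⟪·, v⟫`, so it is constant in directions
orthogonal to `v`, and differentiating it along `v` at two points `x`, `y` with `y - x ⟂ v` gives
`μ x = μ y`. Then `u - (μ / 2) * ‖·‖²` has constant derivative on the convex half-space, so it is
affine there.
-/

open Set Topology Module
open scoped RealInnerProductSpace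

lemma Convex.exists_eq_clm_add_const_of_second_deriv_zero {E F : Type*} [NormedAddCommGroup E]
    [NormedSpace ℝ E] [NormedAddCommGroup F] [NormedSpace ℝ F] {U : Set E} (hU : Convex ℝ U)
    {f : E → F} {f' : E → E →L[ℝ] F} (hf : ∀ x ∈ U, HasFDerivAt f (f' x) x)
    (hf' : ∀ x ∈ U, HasFDerivAt f' (0 : E →L[ℝ] E →L[ℝ] F) x) :
    ∃ (L : E →L[ℝ] F) (C : F), ∀ x ∈ U, f x = L x + C := by
  rcases U.eq_empty_or_nonempty with rfl | ⟨x₀, hx₀⟩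
  · exact ⟨0, 0, by simp⟩
  have hconst : ∀ x ∈ U, f' x = f' x₀ := fun x hx => by
    have := hU.norm_image_sub_le_of_norm_hasFDerivWithin_le
      (fun z hz => (hf' z hz).hasFDerivWithinAt) (fun _ _ => norm_zero.le) hx₀ hx
    rwa [zero_mul, norm_le_zero_iff, sub_eq_zero] at this
  refine ⟨f' x₀, f x₀ - f' x₀ x₀, fun x hx => ?_⟩
  have := hU.norm_image_sub_le_of_norm_hasFDerivWithin_le' (φ := f' x₀) (C := 0)
    (fun z hz => (hf z hz).hasFDerivWithinAt) (fun z hz => by simp [hconst z hz]) hx₀ hx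
  rw [zero_mul, norm_le_zero_iff, map_sub] at this
  rw [← sub_eq_zero, ← this]
  abel

section InnerProductSpace

variable {E : Type*} [NormedAddCommGroup E] [InnerProductSpace ℝ E]

lemma exists_ne_zero_inner_eq_zero [FiniteDimensional ℝ E] (hE : 2 ≤ finrank ℝ E) (w : E) :
    ∃ v ≠ 0, ⟪w, v⟫ = 0 := by
  have hspan : finrank ℝ (ℝ ∙ w) ≤ 1 := by
    simpa using finrank_span_le_card (R := ℝ) ({w} : Set E)
  have hpos : 0 < finrank ℝ (ℝ ∙ w)ᗮ := by
    have := (ℝ ∙ w).finrank_add_finrank_orthogonal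
    omega
  obtain ⟨⟨v, hv⟩, hv0⟩ := finrank_pos_iff_exists_ne_zero.1 hpos
  exact ⟨v, by simpa using hv0, Submodule.mem_orthogonal_singleton_iff_inner_right.1 hv⟩

lemma Convex.apply_eq_of_hasFDerivAt_smul_innerSL {U : Set E} (hU : Convex ℝ U)
    {G : E → E →L[ℝ] ℝ} {μ : E → ℝ} (hG : ∀ x ∈ U, HasFDerivAt G (μ x • innerSL ℝ) x)
    {x y v : E} (hx : x ∈ U) (hy : y ∈ U) (hv : ⟪y - x, v⟫ = 0) : G x v = G y v := by
  have hline : ∀ t ∈ Icc (0 : ℝ) 1,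
      HasDerivWithinAt (fun t => G (AffineMap.lineMap x y t) v) 0 (Icc 0 1) t := by
    intro t ht
    have := ((hG _ (hU.lineMap_mem hx hy ht)).comp_hasDerivAt t
      AffineMap.hasDerivAt_lineMap).clm_apply (hasDerivAt_const t v)
    refine this.hasDerivWithinAt.congr_deriv ?_
    simp only [map_zero, add_zero]
    change μ _ * ⟪y - x, v⟫ = 0
    rw [hv, mul_zero]
  have := norm_image_sub_le_of_norm_deriv_le_segment_01' hline fun _ _ => norm_zero.le
  rw [norm_le_zero_iff, sub_eq_zero] at this
  simpa using this.symm

lemma Convex.coeff_eq_of_hasFDerivAt_smul_innerSL [FiniteDimensional ℝ E] (hE : 2 ≤ finrank ℝ E)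
    {U : Set E} (hUo : IsOpen U) (hU : Convex ℝ U)
    {G : E → E →L[ℝ] ℝ} {μ : E → ℝ} (hG : ∀ x ∈ U, HasFDerivAt G (μ x • innerSL ℝ) x)
    {x y : E} (hx : x ∈ U) (hy : y ∈ U) : μ x = μ y := by
  obtain ⟨v, hv0, hv⟩ := exists_ne_zero_inner_eq_zero hE (y - x)
  have hderiv : ∀ z ∈ U, HasDerivAt (fun s : ℝ => G (z + s • v) v) (μ z * ‖v‖ ^ 2) 0 := by
    intro z hz
    have hl : HasDerivAt (fun s : ℝ => z + s • v) v 0 := by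
      simpa using ((hasDerivAt_id (0 : ℝ)).smul_const v).const_add z
    refine (((hG z hz).comp_hasDerivAt_of_eq 0 hl (by simp)).clm_apply
      (hasDerivAt_const 0 v)).congr_deriv ?_
    simp only [map_zero, add_zero]
    change μ z * ⟪v, v⟫ = _
    rw [real_inner_self_eq_norm_sq]
  have hnear : ∀ z ∈ U, ∀ᶠ s : ℝ in 𝓝 0, z + s • v ∈ U := fun z hz =>
    (continuous_const.add (continuous_id.smul continuous_const)).continuousAt.preimage_mem_nhds
      (by simpa using hUo.mem_nhds hz)
  have heq : (fun s : ℝ => G (x + s • v) v) =ᶠ[𝓝 0] fun s => G (y + s • v) v := by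
    filter_upwards [hnear x hx, hnear y hy] with s hxs hys
    exact hU.apply_eq_of_hasFDerivAt_smul_innerSL hG hxs hys (by simpa using hv)
  exact mul_right_cancel₀ (pow_ne_zero 2 (norm_ne_zero_iff.2 hv0))
    ((hderiv x hx).unique ((hderiv y hy).congr_of_eventuallyEq heq))

lemma Convex.exists_eq_quadratic_of_hasFDerivAt_const_smul_innerSL {U : Set E} (hU : Convex ℝ U)
    {u : E → ℝ} {G : E → E →L[ℝ] ℝ} {a : ℝ} (hu : ∀ x ∈ U, HasFDerivAt u (G x) x)
    (hG : ∀ x ∈ U, HasFDerivAt G (a • innerSL ℝ) x) :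
    ∃ (L : E →L[ℝ] ℝ) (C : ℝ), ∀ x ∈ U, u x = a / 2 * ‖x‖ ^ 2 + L x + C := by
  obtain ⟨L, C, h⟩ := hU.exists_eq_clm_add_const_of_second_deriv_zero
    (f := fun x => u x - a / 2 * ‖x‖ ^ 2) (f' := fun x => G x - (a • innerSL ℝ) x)
    (fun x hx => by
      convert (hu x hx).sub ((hasStrictFDerivAt_norm_sq x).hasFDerivAt.const_mul (a / 2)) using 2
      · rfl
      · rw [two_smul, smul_add, ← add_smul, add_halves]
        rfl)
    (fun x hx => by
      have := (hG x hx).sub (a • innerSL ℝ).hasFDerivAt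
      rwa [sub_self] at this)
  exact ⟨L, C, fun x hx => by linarith [h x hx]⟩

theorem Convex.exists_eq_quadratic_of_hasFDerivAt_smul_innerSL [FiniteDimensional ℝ E]
    (hE : 2 ≤ finrank ℝ E) {U : Set E} (hUo : IsOpen U) (hU : Convex ℝ U)
    {u : E → ℝ} {G : E → E →L[ℝ] ℝ} {μ : E → ℝ} (hu : ∀ x ∈ U, HasFDerivAt u (G x) x)
    (hG : ∀ x ∈ U, HasFDerivAt G (μ x • innerSL ℝ) x) :
    ∃ (a : ℝ) (L : E →L[ℝ] ℝ) (C : ℝ), ∀ x ∈ U, u x = a / 2 * ‖x‖ ^ 2 + L x + C := by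
  rcases U.eq_empty_or_nonempty with rfl | ⟨x₀, hx₀⟩
  · exact ⟨0, 0, 0, by simp⟩
  refine ⟨μ x₀, hU.exists_eq_quadratic_of_hasFDerivAt_const_smul_innerSL hu fun x hx => ?_⟩
  rw [← hU.coeff_eq_of_hasFDerivAt_smul_innerSL hE hUo hG hx hx₀]
  exact hG x hx

end InnerProductSpace

section EuclideanSpace

variable {ι : Type*} [Fintype ι] [DecidableEq ι]

lemma EuclideanSpace.bilinear_ext_single {F : Type*} [NormedAddCommGroup F] [NormedSpace ℝ F]
    {B B' : EuclideanSpace ℝ ι →L[ℝ] EuclideanSpace ℝ ι →L[ℝ] F}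
    (h : ∀ i j, B (EuclideanSpace.single i 1) (EuclideanSpace.single j 1) =
      B' (EuclideanSpace.single i 1) (EuclideanSpace.single j 1)) : B = B' := by
  refine ContinuousLinearMap.coe_injective ((EuclideanSpace.basisFun ι ℝ).toBasis.ext fun i => ?_)
  refine ContinuousLinearMap.coe_injective ((EuclideanSpace.basisFun ι ℝ).toBasis.ext fun j => ?_)
  simpa using h i j

lemma hasFDerivAt_coord_smul_fderiv_add_smul_proj {N : ι} {ξ : EuclideanSpace ℝ ι → ℝ}
    {x : EuclideanSpace ℝ ι} {μ : ℝ} (hξ : DifferentiableAt ℝ ξ x)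
    (hξ' : DifferentiableAt ℝ (fderiv ℝ ξ) x)
    (h : ∀ i j,
      x N * fderiv ℝ (fderiv ℝ ξ) x (EuclideanSpace.single i 1) (EuclideanSpace.single j 1)
        + (if i = N then fderiv ℝ ξ x (EuclideanSpace.single j 1) else 0)
        + (if j = N then fderiv ℝ ξ x (EuclideanSpace.single i 1) else 0)
        = if i = j then μ else 0) :
    HasFDerivAt (fun z => z N • fderiv ℝ ξ z + ξ z • EuclideanSpace.proj (𝕜 := ℝ) N)
      (μ • innerSL ℝ) x := by
  refine (((EuclideanSpace.proj (𝕜 := ℝ) N).hasFDerivAt.smul hξ'.hasFDerivAt).add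
    (hξ.hasFDerivAt.smul_const (EuclideanSpace.proj (𝕜 := ℝ) N))).congr_fderiv ?_
  refine EuclideanSpace.bilinear_ext_single fun i j => ?_
  change x N * _ + EuclideanSpace.single i (1 : ℝ) N * _ + _ * EuclideanSpace.single j (1 : ℝ) N
    = μ * ⟪EuclideanSpace.single i (1 : ℝ), EuclideanSpace.single j 1⟫
  have hij := h i j
  simp only [EuclideanSpace.inner_single_left, PiLp.single_apply, map_one, one_mul]
  split_ifs at hij ⊢ <;> subst_vars <;> simp_all

lemma EuclideanSpace.quadratic_eq_sum (hι : (Fintype.card ι : ℝ) ≠ 0) (a C : ℝ)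
    (L : EuclideanSpace ℝ ι →L[ℝ] ℝ) (x : EuclideanSpace ℝ ι) :
    a / 2 * ‖x‖ ^ 2 + L x + C
      = ∑ i, (a / 2 * x i ^ 2 + L (EuclideanSpace.single i 1) * x i + C / Fintype.card ι) := by
  have hLx : L x = ∑ i, L (EuclideanSpace.single i 1) * x i := by
    conv_lhs => rw [← (EuclideanSpace.basisFun ι ℝ).sum_repr x]
    simp [mul_comm]
  rw [Finset.sum_add_distrib, Finset.sum_add_distrib, ← Finset.mul_sum,
    ← EuclideanSpace.real_norm_sq_eq, ← hLx, Finset.sum_const, Finset.card_univ, nsmul_eq_mul,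
    mul_div_cancel₀ _ hι]

end EuclideanSpace

lemma hessian_coord_mul_eq_of_pde {n : ℕ} (hn : (n : ℝ) ≠ 0) {N : Fin n}
    {ξ : EuclideanSpace ℝ (Fin n) → ℝ} {x : EuclideanSpace ℝ (Fin n)} (hxN : x N ≠ 0)
    (hξ' : DifferentiableAt ℝ (fderiv ℝ ξ) x)
    (hpde : ∀ i j : Fin n,
      fderiv ℝ (fun z => fderiv ℝ ξ z (EuclideanSpace.single j 1)) x (EuclideanSpace.single i 1)
        - ((∑ k : Fin n, fderiv ℝ (fun z => fderiv ℝ ξ z (EuclideanSpace.single k 1)) x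
            (EuclideanSpace.single k 1)) / n) * (if i = j then 1 else 0)
        + fderiv ℝ ξ x (EuclideanSpace.single i 1) * ((if j = N then 1 else 0) / x N)
        + ((if i = N then 1 else 0) / x N) * fderiv ℝ ξ x (EuclideanSpace.single j 1)
        - (2 / n) * (fderiv ℝ ξ x (EuclideanSpace.single N 1) / x N) * (if i = j then 1 else 0)
        = 0) (i j : Fin n) :
    x N * fderiv ℝ (fderiv ℝ ξ) x (EuclideanSpace.single i 1) (EuclideanSpace.single j 1)
      + (if i = N then fderiv ℝ ξ x (EuclideanSpace.single j 1) else 0)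
      + (if j = N then fderiv ℝ ξ x (EuclideanSpace.single i 1) else 0)
      = if i = j then x N * ((∑ k : Fin n, fderiv ℝ (fderiv ℝ ξ) x (EuclideanSpace.single k 1)
          (EuclideanSpace.single k 1)) / n) + 2 / n * fderiv ℝ ξ x (EuclideanSpace.single N 1)
        else 0 := by
  have hsecond : ∀ v w, fderiv ℝ (fun z => fderiv ℝ ξ z w) x v = fderiv ℝ (fderiv ℝ ξ) x v w :=
    fun v w => by simp [fderiv_clm_apply hξ' (differentiableAt_const w)]
  have h := hpde i j
  simp only [hsecond] at h
  split_ifs at h ⊢ <;>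
  · linear_combination (norm := skip) x N * h
    field_simp
    ring

theorem stmt_8_general (n : ℕ) (hn : 2 ≤ n)
    (N : Fin n)
    (H : Set (EuclideanSpace ℝ (Fin n)))
    (hH : H = {x : EuclideanSpace ℝ (Fin n) | 0 < x N})
    (ξ : EuclideanSpace ℝ (Fin n) → ℝ)
    (hξ : ContDiffOn ℝ 2 ξ H)
    (pd : Fin n → (EuclideanSpace ℝ (Fin n) → ℝ) → EuclideanSpace ℝ (Fin n) → ℝ)
    (hpd : ∀ i g x, pd i g x = fderiv ℝ g x (EuclideanSpace.single i 1))
    (heq : ∀ x ∈ H, ∀ i j : Fin n,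
      pd i (pd j ξ) x
        - ((∑ k : Fin n, pd k (pd k ξ) x) / n) * (if i = j then 1 else 0)
        + pd i ξ x * ((if j = N then 1 else 0) / x N)
        + ((if i = N then 1 else 0) / x N) * pd j ξ x
        - (2 / n) * (pd N ξ x / x N) * (if i = j then 1 else 0) = 0) :
    ∃ (a : ℝ) (b c : Fin n → ℝ),
      ∀ x ∈ H, ξ x = (1 / x N) * ∑ i : Fin n, ((a / 2) * (x i) ^ 2 + b i * x i + c i) := by
  obtain rfl : pd = fun i g x => fderiv ℝ g x (EuclideanSpace.single i 1) := by
    funext i g x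
    exact hpd i g x
  have hn0 : (n : ℝ) ≠ 0 := by positivity
  have hHo : IsOpen H := hH ▸ isOpen_lt continuous_const (EuclideanSpace.proj N).continuous
  have hHc : Convex ℝ H := hH ▸ convex_halfSpace_gt (EuclideanSpace.proj N).isLinear 0
  have hxN : ∀ x ∈ H, x N ≠ 0 := fun x hx => (hH ▸ hx : x ∈ {x | 0 < x N}).ne'
  have hξ₁ : ∀ x ∈ H, DifferentiableAt ℝ ξ x := fun x hx =>
    (hξ.contDiffAt (hHo.mem_nhds hx)).differentiableAt two_ne_zero
  have hξ₂ : ∀ x ∈ H, DifferentiableAt ℝ (fderiv ℝ ξ) x := fun x hx =>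
    ((hξ.contDiffAt (hHo.mem_nhds hx)).fderiv_right one_add_one_eq_two.le).differentiableAt
      one_ne_zero
  obtain ⟨a, L, C, hu⟩ := hHc.exists_eq_quadratic_of_hasFDerivAt_smul_innerSL
    (by simpa using hn) hHo (u := fun x => x N * ξ x)
    (fun x hx => (EuclideanSpace.proj N).hasFDerivAt.mul (hξ₁ x hx).hasFDerivAt)
    (fun x hx => hasFDerivAt_coord_smul_fderiv_add_smul_proj (hξ₁ x hx) (hξ₂ x hx)
      (hessian_coord_mul_eq_of_pde hn0 (hxN x hx) (hξ₂ x hx) (heq x hx)))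
  refine ⟨a, fun i => L (EuclideanSpace.single i 1), fun _ => C / n, fun x hx => ?_⟩
  have hsum := EuclideanSpace.quadratic_eq_sum (by simpa using hn0) a C L x
  rw [Fintype.card_fin, ← hu x hx] at hsum
  rw [← hsum]
  field_simp [hxN x hx]

theorem stmt_8 (n : ℕ) (hn : 2 ≤ n)
    (N : Fin n) (hN : (N : ℕ) = n - 1)
    (H : Set (EuclideanSpace ℝ (Fin n)))
    (hH : H = {x : EuclideanSpace ℝ (Fin n) | 0 < x N})
    (ξ : EuclideanSpace ℝ (Fin n) → ℝ)
    (hξ : ContDiffOn ℝ 2 ξ H)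
    (pd : Fin n → (EuclideanSpace ℝ (Fin n) → ℝ) → EuclideanSpace ℝ (Fin n) → ℝ)
    (hpd : ∀ i g x, pd i g x = fderiv ℝ g x (EuclideanSpace.single i 1))
    (heq : ∀ x ∈ H, ∀ i j : Fin n,
      pd i (pd j ξ) x
        - ((∑ k : Fin n, pd k (pd k ξ) x) / n) * (if i = j then 1 else 0)
        + pd i ξ x * ((if j = N then 1 else 0) / x N)
        + ((if i = N then 1 else 0) / x N) * pd j ξ x
        - (2 / n) * (pd N ξ x / x N) * (if i = j then 1 else 0) = 0) :
    ∃ (a : ℝ) (b c : Fin n → ℝ),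
      ∀ x ∈ H, ξ x = (1 / x N) * ∑ i : Fin n, ((a / 2) * (x i) ^ 2 + b i * x i + c i) :=
  stmt_8_general n hn N H hH ξ hξ pd hpd heq
end
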